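/- Let h be the Hénon map with parameters M₁, M₂ ∈ ℝ, and assume −1 < M₂ < 0 and 3(1 − M₂)² < 4M₁ < (1 + M₂)² + 4(1 − M₂)². Then h has a period-2 orbit {(u,v), (v,u)} with u + v = 1 − M₂, u·v = (1 − M₂)² − M₁ and u ≠ v, and both complex eigenvalues of the 2×2 matrix product Dh(v,u)·Dh(u,v) (the Jacobian matrix of h∘h along the orbit, where Dh(x,y) = [[0,1],[M₂,−2y]]) have modulus strictly less than 1; i.e. the period-2 orbit born at the period-doubling curve 4M₁ = 3(1 − M₂)² is asymptotically stable. -/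

import Mathlib

/-!
Write `s = 1 - M₂`. The points `(u, v)`, `(v, u)` with `u + v = s` and `uv = s² - M₁` are swapped
by the Hénon map, and distinct real such `u, v` exist since the discriminant `4M₁ - 3s²` is
positive. Along this orbit the Jacobian of `h ∘ h` has determinant `M₂²` and trace
`τ = 2M₂ + 4uv`, so its eigenvalues are the roots of `μ² - τμ + M₂²`. By the Schur–Cohn
criterion they lie in the unit disc once `M₂² < 1` and `|τ| < 1 + M₂²`; the two halves of the
last inequality are exactly the two bounds on `4M₁`.
-/

/-- The Hénon map with parameters `M₁, M₂ : ℝ`: `h(x,y) = (y, M₁ + M₂·x − y²)`. -/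
def henon (M₁ M₂ : ℝ) (p : ℝ × ℝ) : ℝ × ℝ :=
  (p.2, M₁ + M₂ * p.1 - p.2 ^ 2)

/-- The Jacobian matrix of the Hénon map at the point `(x,y)`: `[[0, 1], [M₂, −2y]]`. -/
def henonJac (M₂ : ℝ) (p : ℝ × ℝ) : Matrix (Fin 2) (Fin 2) ℝ :=
  !![0, 1; M₂, -2 * p.2]

/-- `μ ∈ ℂ` is an eigenvalue of the real 2×2 matrix `A`
(eigenvalues of real matrices are taken over `ℂ`). -/
def hasEigenvalue (A : Matrix (Fin 2) (Fin 2) ℝ) (μ : ℂ) : Prop :=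
  (A.map (fun t : ℝ => (t : ℂ)) - μ • 1).det = 0

/-- `a² + δ = τa ≤ |τ||a| < (1 + δ)|a|` says `(|a| - 1)(|a| - δ) < 0`. -/
theorem abs_lt_one_of_sq_sub_mul_add_eq_zero {τ δ a : ℝ} (hδ : δ < 1) (hτ : |τ| < 1 + δ)
    (ha : a ^ 2 - τ * a + δ = 0) : |a| < 1 := by
  rcases eq_or_ne a 0 with rfl | ha0
  · simp
  have hbound : a ^ 2 + δ < (1 + δ) * |a| :=
    calc a ^ 2 + δ = τ * a := by linear_combination ha
      _ ≤ |τ| * |a| := by rw [← abs_mul]; exact le_abs_self _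
      _ < (1 + δ) * |a| := mul_lt_mul_of_pos_right hτ (abs_pos.mpr ha0)
  nlinarith [sq_abs a, abs_nonneg a]

/-- Schur–Cohn criterion for real quadratics. Non-real roots are conjugate, so `‖μ‖² = δ`. -/
theorem Complex.norm_lt_one_of_sq_sub_mul_add_eq_zero {τ δ : ℝ} (hδ : δ < 1)
    (hτ : |τ| < 1 + δ) {μ : ℂ} (hμ : μ ^ 2 - τ * μ + δ = 0) : ‖μ‖ < 1 := by
  have hre : μ.re ^ 2 - μ.im ^ 2 - τ * μ.re + δ = 0 := by
    simpa [pow_two] using congrArg Complex.re hμ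
  have him : μ.im * (2 * μ.re - τ) = 0 := by
    have := congrArg Complex.im hμ
    simp only [pow_two, Complex.sub_im, Complex.add_im, Complex.mul_im, Complex.ofReal_re,
      Complex.ofReal_im, Complex.zero_im] at this
    linear_combination this
  rw [← sq_lt_one_iff₀ (norm_nonneg μ), Complex.sq_norm, Complex.normSq_apply]
  rcases mul_eq_zero.mp him with him0 | hre_half
  · have hreal : μ.re ^ 2 - τ * μ.re + δ = 0 := by rw [him0] at hre; linear_combination hre
    have := abs_lt_one_of_sq_sub_mul_add_eq_zero hδ hτ hreal
    rw [him0]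
    nlinarith [sq_abs μ.re, abs_nonneg μ.re]
  · have hnormSq : μ.re * μ.re + μ.im * μ.im = δ := by linear_combination μ.re * hre_half - hre
    linarith

theorem exists_ne_add_eq_mul_eq {s p : ℝ} (hdisc : 4 * p < s ^ 2) :
    ∃ u v : ℝ, u ≠ v ∧ u + v = s ∧ u * v = p := by
  have hpos : 0 < s ^ 2 - 4 * p := by linarith
  have hsq := Real.sq_sqrt hpos.le
  refine ⟨(s + √(s ^ 2 - 4 * p)) / 2, (s - √(s ^ 2 - 4 * p)) / 2, ?_, by ring, ?_⟩
  · have := Real.sqrt_pos.mpr hpos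
    intro h; linarith
  · linear_combination -hsq / 4

theorem hasEigenvalue_iff {A : Matrix (Fin 2) (Fin 2) ℝ} {μ : ℂ} :
    hasEigenvalue A μ ↔ μ ^ 2 - A.trace * μ + A.det = 0 := by
  simp [hasEigenvalue, Matrix.det_fin_two, Matrix.trace_fin_two]
  constructor <;> intro h <;> linear_combination h

theorem henon_eq_swap {M₁ M₂ u v : ℝ} (hsum : u + v = 1 - M₂)
    (hprod : u * v = (1 - M₂) ^ 2 - M₁) : henon M₁ M₂ (u, v) = (v, u) := by
  simp only [henon, Prod.mk.injEq, true_and]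
  linear_combination -(v + 1 - M₂) * hsum + hprod

theorem trace_henonJac_mul_henonJac (M₂ u v : ℝ) :
    (henonJac M₂ (v, u) * henonJac M₂ (u, v)).trace = 2 * M₂ + 4 * (u * v) := by
  simp [henonJac, Matrix.trace_fin_two]; ring

theorem det_henonJac (M₂ : ℝ) (p : ℝ × ℝ) : (henonJac M₂ p).det = -M₂ := by
  simp [henonJac, Matrix.det_fin_two]

/-- for `−1 < M₂ < 0` and `3(1−M₂)² < 4M₁ < (1+M₂)² + 4(1−M₂)²`, the Hénon
map has a period-2 orbit `{(u,v), (v,u)}` with `u + v = 1 − M₂`, `u·v = (1−M₂)² − M₁`,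
`u ≠ v`, and all complex eigenvalues of `Dh(v,u)·Dh(u,v)` (the Jacobian matrix of `h∘h`
along the orbit) have modulus `< 1`: the period-2 orbit is asymptotically stable. -/
theorem stmt_8 (M₁ M₂ : ℝ) (h1 : -1 < M₂) (h2 : M₂ < 0)
    (h3 : 3 * (1 - M₂) ^ 2 < 4 * M₁)
    (h4 : 4 * M₁ < (1 + M₂) ^ 2 + 4 * (1 - M₂) ^ 2) :
    ∃ u v : ℝ, u ≠ v ∧ u + v = 1 - M₂ ∧ u * v = (1 - M₂) ^ 2 - M₁ ∧
      henon M₁ M₂ (u, v) = (v, u) ∧ henon M₁ M₂ (v, u) = (u, v) ∧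
      ∀ μ : ℂ, hasEigenvalue (henonJac M₂ (v, u) * henonJac M₂ (u, v)) μ →
        ‖μ‖ < 1 := by
  obtain ⟨u, v, huv, hsum, hprod⟩ :=
    exists_ne_add_eq_mul_eq (s := 1 - M₂) (p := (1 - M₂) ^ 2 - M₁) (by linarith)
  refine ⟨u, v, huv, hsum, hprod, henon_eq_swap hsum hprod,
    henon_eq_swap (by linarith) (by linarith), fun μ hμ => ?_⟩
  rw [hasEigenvalue_iff, trace_henonJac_mul_henonJac, Matrix.det_mul, det_henonJac,
    det_henonJac, hprod] at hμ
  exact Complex.norm_lt_one_of_sq_sub_mul_add_eq_zero (by nlinarith)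
    (abs_lt.mpr ⟨by nlinarith, by nlinarith⟩) hμ
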